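/- There exists λ₀ > 0 such that for every λ ≥ λ₀ there exist s₀ > 0 and, for each s ≥ s₀(T⁴ + T⁸), a constant C > 0 (depending on Ω, λ, s, T and η₀) such that the function ρ(t) = e^{(s/2)β*(t) − sβ̂(t)} γ̂(t)^{13/8} satisfies |ρ′(t)| ≤ C e^{−sβ*(t)} (γ*(t))^{−3/2} for all t ∈ (0,T). -/

import Mathlib

open MeasureTheory Real Set Filter Metric

noncomputable section

/-- Partial derivative in the `i`-th coordinate direction. -/
def pd {N : ℕ} (i : Fin N) (f : (Fin N → ℝ) → ℝ) (x : Fin N → ℝ) : ℝ :=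
  fderiv ℝ f x (Pi.single i 1)

/-- Spatial gradient. -/
def grad {N : ℕ} (f : (Fin N → ℝ) → ℝ) (x : Fin N → ℝ) : Fin N → ℝ :=
  fun i => pd i f x

/-- Laplacian. -/
def lap {N : ℕ} (f : (Fin N → ℝ) → ℝ) (x : Fin N → ℝ) : ℝ :=
  ∑ i, pd i (fun y => pd i f y) x

/-- Divergence of a vector field. -/
def dvg {N : ℕ} (F : (Fin N → ℝ) → (Fin N → ℝ)) (x : Fin N → ℝ) : ℝ :=
  ∑ i, pd i (fun y => F y i) x

/-- Euclidean dot product. -/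
def dot {N : ℕ} (a b : Fin N → ℝ) : ℝ := ∑ i, a i * b i

/-- Euclidean norm. -/
def eunorm {N : ℕ} (a : Fin N → ℝ) : ℝ := Real.sqrt (∑ i, (a i) ^ 2)

/-- Square of the `H¹(Ω)` norm (classical derivatives). -/
def H1sq {N : ℕ} (Ω : Set (Fin N → ℝ)) (f : (Fin N → ℝ) → ℝ) : ℝ :=
  ∫ x in Ω, ((f x) ^ 2 + ∑ i, (pd i f x) ^ 2)

/-- Square of the `H²(Ω)` norm (classical derivatives). -/
def H2sq {N : ℕ} (Ω : Set (Fin N → ℝ)) (f : (Fin N → ℝ) → ℝ) : ℝ :=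
  ∫ x in Ω, ((f x) ^ 2 + ∑ i, (pd i f x) ^ 2 + ∑ i, ∑ j, (pd i (fun y => pd j f y) x) ^ 2)

/-- Square of the `H³(Ω)` norm (classical derivatives). -/
def H3sq {N : ℕ} (Ω : Set (Fin N → ℝ)) (f : (Fin N → ℝ) → ℝ) : ℝ :=
  ∫ x in Ω, ((f x) ^ 2 + ∑ i, (pd i f x) ^ 2 + ∑ i, ∑ j, (pd i (fun y => pd j f y) x) ^ 2
    + ∑ i, ∑ j, ∑ k, (pd i (fun y => pd j (fun z => pd k f z) y) x) ^ 2)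

/-- Double integral over `D × (0,T)`. -/
def DInt {N : ℕ} (D : Set (Fin N → ℝ)) (T : ℝ) (F : (Fin N → ℝ) → ℝ → ℝ) : ℝ :=
  ∫ t in Ioo (0 : ℝ) T, ∫ x in D, F x t

/-- Sup of `|f|` over the closure of `Ω`. -/
def supAbs {N : ℕ} (Ω : Set (Fin N → ℝ)) (f : (Fin N → ℝ) → ℝ) : ℝ :=
  sSup ((fun x => |f x|) '' closure Ω)

/-- Carleman weight `φ`. -/
def phiW {N : ℕ} (T lam : ℝ) (η₀ : (Fin N → ℝ) → ℝ) (x : Fin N → ℝ) (t : ℝ) : ℝ :=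
  Real.exp (lam * η₀ x) / (t ^ 4 * (T - t) ^ 4)

/-- Carleman weight `α`. -/
def alpW {N : ℕ} (Ω : Set (Fin N → ℝ)) (T lam : ℝ) (η₀ : (Fin N → ℝ) → ℝ)
    (x : Fin N → ℝ) (t : ℝ) : ℝ :=
  (Real.exp (lam * η₀ x) - Real.exp (2 * lam * supAbs Ω η₀)) / (t ^ 4 * (T - t) ^ 4)

/-- The truncated time weight `l`. -/
def lW (T t : ℝ) : ℝ := if t ≤ T / 2 then T ^ 2 / 4 else t * (T - t)

/-- Weight `β` (non-vanishing at `t = 0`). -/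
def betaW {N : ℕ} (Ω : Set (Fin N → ℝ)) (T lam : ℝ) (η₀ : (Fin N → ℝ) → ℝ)
    (x : Fin N → ℝ) (t : ℝ) : ℝ :=
  (Real.exp (lam * η₀ x) - Real.exp (2 * lam * supAbs Ω η₀)) / (lW T t) ^ 4

/-- Weight `γ` (non-vanishing at `t = 0`). -/
def gamW {N : ℕ} (T lam : ℝ) (η₀ : (Fin N → ℝ) → ℝ) (x : Fin N → ℝ) (t : ℝ) : ℝ :=
  Real.exp (lam * η₀ x) / (lW T t) ^ 4

/-- `γ̂(t) = min over cl Ω of γ(·,t)`. -/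
def gamHat {N : ℕ} (Ω : Set (Fin N → ℝ)) (T lam : ℝ) (η₀ : (Fin N → ℝ) → ℝ) (t : ℝ) : ℝ :=
  sInf ((fun x => gamW T lam η₀ x t) '' closure Ω)

/-- `γ*(t) = max over cl Ω of γ(·,t)`. -/
def gamStar {N : ℕ} (Ω : Set (Fin N → ℝ)) (T lam : ℝ) (η₀ : (Fin N → ℝ) → ℝ) (t : ℝ) : ℝ :=
  sSup ((fun x => gamW T lam η₀ x t) '' closure Ω)

/-- `β̂(t) = min over cl Ω of β(·,t)`. -/
def betaHat {N : ℕ} (Ω : Set (Fin N → ℝ)) (T lam : ℝ) (η₀ : (Fin N → ℝ) → ℝ) (t : ℝ) : ℝ :=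
  sInf ((fun x => betaW Ω T lam η₀ x t) '' closure Ω)

/-- `β*(t) = max over cl Ω of β(·,t)`. -/
def betaStar {N : ℕ} (Ω : Set (Fin N → ℝ)) (T lam : ℝ) (η₀ : (Fin N → ℝ) → ℝ) (t : ℝ) : ℝ :=
  sSup ((fun x => betaW Ω T lam η₀ x t) '' closure Ω)

/-- Smoothness on the closed cylinder `cl(Ω) × [0,T]`. -/
def SmoothOnClQ {N : ℕ} (Ω : Set (Fin N → ℝ)) (T : ℝ) (q : (Fin N → ℝ) → ℝ → ℝ) : Prop :=
  ContDiffOn ℝ (⊤ : ℕ∞) (fun p : (Fin N → ℝ) × ℝ => q p.1 p.2) (closure Ω ×ˢ Icc 0 T)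

/-- The Carleman functional `I_β(s,σ;q)`. -/
def IB {N : ℕ} (Ω : Set (Fin N → ℝ)) (T lam : ℝ) (η₀ : (Fin N → ℝ) → ℝ)
    (s β σq : ℝ) (q : (Fin N → ℝ) → ℝ → ℝ) : ℝ :=
  s ^ (β + 3) * DInt Ω T (fun x t =>
      Real.exp (2 * s * alpW Ω T lam η₀ x t) * phiW T lam η₀ x t ^ (β + 3) * (q x t) ^ 2)
  + s ^ (β + 1) * DInt Ω T (fun x t =>
      Real.exp (2 * s * alpW Ω T lam η₀ x t) * phiW T lam η₀ x t ^ (β + 1) *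
        ∑ i, (pd i (fun y => q y t) x) ^ 2)
  + s ^ (β - 1) * DInt Ω T (fun x t =>
      Real.exp (2 * s * alpW Ω T lam η₀ x t) * phiW T lam η₀ x t ^ (β - 1) *
        (σq ^ 2 * (deriv (q x) t) ^ 2 +
          ∑ i, ∑ j, (pd i (fun y => pd j (fun z => q z t) y) x) ^ 2))

/-- The auxiliary weight `θ = ρ₁ s³ φ³ e^{sα}`. -/
def thetaW {N : ℕ} (Ω : Set (Fin N → ℝ)) (T lam : ℝ) (η₀ ρ₁ : (Fin N → ℝ) → ℝ)
    (s : ℝ) (x : Fin N → ℝ) (t : ℝ) : ℝ :=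
  ρ₁ x * s ^ 3 * phiW T lam η₀ x t ^ 3 * Real.exp (s * alpW Ω T lam η₀ x t)

/-- The `H⁻¹(Ω)` norm, defined by duality against smooth compactly supported functions. -/
def Hm1 {N : ℕ} (Ω : Set (Fin N → ℝ)) (g : (Fin N → ℝ) → ℝ) : ℝ :=
  sSup {r : ℝ | ∃ v : (Fin N → ℝ) → ℝ, ContDiff ℝ (⊤ : ℕ∞) v ∧ HasCompactSupport v ∧
    tsupport v ⊆ Ω ∧ (∫ x in Ω, ∑ i, (pd i v x) ^ 2) ≤ 1 ∧ r = ∫ x in Ω, g x * v x}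

/-! Since `η₀ > 0` in `Ω` and `η₀ = 0` on `∂Ω`, the minimum of `η₀` over `cl Ω` is `0` and its
maximum `M` is positive, so with `a = e^{λM}` and `v = l⁻⁴` the extremal weights are explicit:
`β* = (a - a²) v`, `β̂ = (1 - a²) v`, `γ̂ = v`, `γ* = a v`. Hence `ρ = e^{c v} v^{13/8}` with
`c = s (a² + a - 2) / 2`, while the right-hand side is `a^{-3/2} e^{(c + B) v} v^{-3/2}` with
`B = s (a - 1) (a - 2) / 2`, which is positive as soon as `λ ≥ 1 / M` forces `a > 2`. Since
`|v'| ≲ v²`, the estimate reduces to `v^{41/8} + v^{33/8} ≲ e^{B v}`. -/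
lemma exists_rpow_le_mul_exp {B q : ℝ} (hB : 0 < B) (hq : 0 ≤ q) :
    ∃ C > 0, ∀ v : ℝ, 0 ≤ v → v ^ q ≤ C * exp (B * v) := by
  set n := ⌈q⌉₊
  refine ⟨1 + n.factorial / B ^ n, by positivity, fun v hv => ?_⟩
  have hpow : v ^ n ≤ n.factorial / B ^ n * exp (B * v) := by
    have h := pow_div_factorial_le_exp (B * v) (mul_nonneg hB.le hv) n
    rw [mul_pow, div_le_iff₀ (by positivity)] at h
    rw [div_mul_eq_mul_div, le_div_iff₀ (by positivity)]
    linarith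
  have hrpow : v ^ q ≤ 1 + v ^ n := by
    rcases le_total v 1 with hv1 | hv1
    · linarith [rpow_le_one hv hv1 hq, pow_nonneg hv n]
    · calc v ^ q ≤ v ^ (n : ℝ) := rpow_le_rpow_of_exponent_le hv1 (Nat.le_ceil q)
        _ ≤ 1 + v ^ n := by rw [rpow_natCast]; linarith
  nlinarith [one_le_exp (mul_nonneg hB.le hv)]

lemma exists_abs_mul_rpow_add_le_mul_exp (c : ℝ) {p r B : ℝ} (hB : 0 < B) (hpr : 0 ≤ p + 1 + r) :
    ∃ C > 0, ∀ v : ℝ, 0 < v →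
      |c * v ^ p + p * v ^ (p - 1)| * v ^ 2 ≤ C * exp (B * v) * v ^ (-r) := by
  obtain ⟨C₁, hC₁, h₁⟩ := exists_rpow_le_mul_exp hB (show 0 ≤ p + 2 + r by linarith)
  obtain ⟨C₂, hC₂, h₂⟩ := exists_rpow_le_mul_exp hB hpr
  refine ⟨|c| * C₁ + |p| * C₂ + 1, by positivity, fun v hv => ?_⟩
  have hsplit : ∀ q : ℝ, v ^ q * v ^ 2 = v ^ (q + 2 + r) * v ^ (-r) := fun q => by
    rw [← rpow_natCast, ← rpow_add hv, ← rpow_add hv]; norm_num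
  have hsplit' : v ^ (p - 1) * v ^ 2 = v ^ (p + 1 + r) * v ^ (-r) := by
    rw [hsplit, show p - 1 + 2 + r = p + 1 + r by ring]
  have hvr : 0 < v ^ (-r) := rpow_pos_of_pos hv _
  calc |c * v ^ p + p * v ^ (p - 1)| * v ^ 2
      ≤ (|c| * v ^ p + |p| * v ^ (p - 1)) * v ^ 2 := by
        gcongr
        refine (abs_add_le _ _).trans_eq ?_
        rw [abs_mul, abs_mul, abs_of_pos (rpow_pos_of_pos hv p),
          abs_of_pos (rpow_pos_of_pos hv (p - 1))]
    _ = (|c| * v ^ (p + 2 + r) + |p| * v ^ (p + 1 + r)) * v ^ (-r) := by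
        rw [add_mul, mul_assoc, mul_assoc, hsplit, hsplit']; ring
    _ ≤ (|c| * (C₁ * exp (B * v)) + |p| * (C₂ * exp (B * v))) * v ^ (-r) := by
        gcongr
        · exact h₁ v hv.le
        · exact h₂ v hv.le
    _ ≤ (|c| * C₁ + |p| * C₂ + 1) * exp (B * v) * v ^ (-r) := by
        nlinarith [exp_pos (B * v)]

lemma abs_deriv_exp_mul_rpow_comp_le {v : ℝ → ℝ} {v' t c p K C B r : ℝ}
    (hv : HasDerivAt v v' t) (hvt : 0 < v t) (hK : 0 ≤ K) (hv' : |v'| ≤ K * v t ^ 2)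
    (hbound : |c * v t ^ p + p * v t ^ (p - 1)| * v t ^ 2 ≤ C * exp (B * v t) * v t ^ (-r)) :
    |deriv (fun τ => exp (c * v τ) * v τ ^ p) t| ≤ K * C * exp ((c + B) * v t) * v t ^ (-r) := by
  have hd : HasDerivAt (fun τ => exp (c * v τ) * v τ ^ p)
      (exp (c * v t) * (c * v t ^ p + p * v t ^ (p - 1)) * v') t :=
    (((hv.const_mul c).exp).fun_mul (hv.rpow_const (p := p) (Or.inl hvt.ne'))).congr_deriv
      (by ring)
  rw [hd.deriv, abs_mul, abs_mul, abs_of_pos (exp_pos _)]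
  calc exp (c * v t) * |c * v t ^ p + p * v t ^ (p - 1)| * |v'|
      ≤ exp (c * v t) * |c * v t ^ p + p * v t ^ (p - 1)| * (K * v t ^ 2) := by gcongr
    _ = K * exp (c * v t) * (|c * v t ^ p + p * v t ^ (p - 1)| * v t ^ 2) := by ring
    _ ≤ K * exp (c * v t) * (C * exp (B * v t) * v t ^ (-r)) := by gcongr
    _ = K * C * exp ((c + B) * v t) * v t ^ (-r) := by rw [add_mul, exp_add]; ring

lemma lW_pos {T t : ℝ} (ht : t ∈ Ioo 0 T) : 0 < lW T t := by
  unfold lW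
  split_ifs with h
  · nlinarith [ht.1, ht.2]
  · exact mul_pos ht.1 (sub_pos.2 ht.2)

lemma lW_le (T t : ℝ) : lW T t ≤ T ^ 2 / 4 := by
  unfold lW
  split_ifs
  · exact le_rfl
  · nlinarith [sq_nonneg (T - 2 * t)]

lemma exists_hasDerivAt_lW {T t : ℝ} (ht : t ∈ Ioo 0 T) (htT : t ≠ T / 2) :
    ∃ l', HasDerivAt (lW T) l' t ∧ |l'| ≤ T := by
  rcases htT.lt_or_gt with h | h
  · refine ⟨0, (hasDerivAt_const t (T ^ 2 / 4)).congr_of_eventuallyEq ?_, ?_⟩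
    · filter_upwards [Iic_mem_nhds h] with τ hτ using if_pos hτ
    · rw [abs_zero]; linarith [ht.1, ht.2]
  · refine ⟨T - 2 * t, HasDerivAt.congr_of_eventuallyEq (f := fun τ => τ * (T - τ)) ?_ ?_,
      abs_le.2 ⟨by linarith [ht.2], by linarith [ht.1]⟩⟩
    · exact ((hasDerivAt_id' t).fun_mul
        ((hasDerivAt_const t T).fun_sub (hasDerivAt_id' t))).congr_deriv (by ring)
    · filter_upwards [Ioi_mem_nhds h] with τ hτ using if_neg (not_le.2 hτ)

lemma exists_hasDerivAt_inv_lW_pow {T t : ℝ} (ht : t ∈ Ioo 0 T) (htT : t ≠ T / 2) :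
    ∃ v', HasDerivAt (fun τ => (lW T τ ^ 4)⁻¹) v' t ∧
      |v'| ≤ 4 * T * (T ^ 2 / 4) ^ 3 * ((lW T t ^ 4)⁻¹) ^ 2 := by
  obtain ⟨l', hl, hl'⟩ := exists_hasDerivAt_lW ht htT
  have hpos := lW_pos ht
  refine ⟨_, (hl.fun_pow 4).fun_inv (pow_pos hpos 4).ne', ?_⟩
  rw [abs_div, abs_neg, abs_of_pos (pow_pos (pow_pos hpos 4) 2), div_eq_mul_inv, inv_pow]
  gcongr ?_ * _
  rw [abs_mul, abs_mul, Nat.abs_cast, abs_of_pos (pow_pos hpos _)]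
  calc ((4 : ℕ) : ℝ) * lW T t ^ (4 - 1) * |l'| ≤ 4 * (T ^ 2 / 4) ^ 3 * T := by
        norm_num
        gcongr
        exact lW_le T t
    _ = 4 * T * (T ^ 2 / 4) ^ 3 := by ring

lemma nonneg_on_closure_of_pos_of_frontier_eq_zero {X : Type*} [TopologicalSpace X] {Ω : Set X}
    {η : X → ℝ} (hpos : ∀ x ∈ Ω, 0 < η x)
    (hbd : ∀ x ∈ frontier Ω, η x = 0) : ∀ x ∈ closure Ω, 0 ≤ η x := by
  intro x hx
  by_cases hxΩ : x ∈ Ω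
  · exact (hpos x hxΩ).le
  · exact (hbd x ⟨hx, fun h => hxΩ (interior_subset h)⟩).ge

lemma sInf_image_closure_eq_zero {E : Type*} [NormedAddCommGroup E] [NormedSpace ℝ E]
    [Nontrivial E] {Ω : Set E} {η : E → ℝ} (hne : Ω.Nonempty) (hb : Bornology.IsBounded Ω)
    (hpos : ∀ x ∈ Ω, 0 < η x) (hbd : ∀ x ∈ frontier Ω, η x = 0) :
    sInf (η '' closure Ω) = 0 := by
  obtain ⟨x, hx⟩ := nonempty_frontier_iff.2 ⟨hne, fun h => NormedSpace.unbounded_univ ℝ E (h ▸ hb)⟩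
  refine IsLeast.csInf_eq ⟨⟨x, frontier_subset_closure hx, hbd x hx⟩, ?_⟩
  rintro _ ⟨y, hy, rfl⟩
  exact nonneg_on_closure_of_pos_of_frontier_eq_zero hpos hbd y hy

lemma sSup_image_comp_of_monotone {X : Type*} {K : Set X} {η : X → ℝ} {g : ℝ → ℝ}
    (hg : Monotone g) (hgc : Continuous g) (hne : K.Nonempty) (hbdd : BddAbove (η '' K)) :
    sSup ((fun x => g (η x)) '' K) = g (sSup (η '' K)) := by
  rw [hg.map_csSup_of_continuousAt hgc.continuousAt (hne.image η) hbdd, image_image]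

lemma sInf_image_comp_of_monotone {X : Type*} {K : Set X} {η : X → ℝ} {g : ℝ → ℝ}
    (hg : Monotone g) (hgc : Continuous g) (hne : K.Nonempty) (hbdd : BddBelow (η '' K)) :
    sInf ((fun x => g (η x)) '' K) = g (sInf (η '' K)) := by
  rw [hg.map_csInf_of_continuousAt hgc.continuousAt (hne.image η) hbdd, image_image]

section Weights

variable {N : ℕ} {Ω : Set (Fin N → ℝ)} {η₀ : (Fin N → ℝ) → ℝ} {T lam M : ℝ}

lemma supAbs_eq_sSup (hnonneg : ∀ x ∈ closure Ω, 0 ≤ η₀ x) :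
    supAbs Ω η₀ = sSup (η₀ '' closure Ω) := by
  rw [supAbs, image_congr fun x hx => abs_of_nonneg (hnonneg x hx)]

lemma monotone_exp_mul_sub_div (hlam : 0 ≤ lam) (b L : ℝ) :
    Monotone fun u => (exp (lam * u) - b) / L ^ 4 := fun u v huv => by
  dsimp only
  gcongr

lemma betaStar_eq (hlam : 0 ≤ lam) (hne : (closure Ω).Nonempty) (hbdd : BddAbove (η₀ '' closure Ω))
    (τ : ℝ) : betaStar Ω T lam η₀ τ =
      (exp (lam * sSup (η₀ '' closure Ω)) - exp (2 * lam * supAbs Ω η₀)) / lW T τ ^ 4 :=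
  sSup_image_comp_of_monotone (monotone_exp_mul_sub_div hlam _ _) (by fun_prop) hne hbdd

lemma betaHat_eq (hlam : 0 ≤ lam) (hne : (closure Ω).Nonempty) (hbdd : BddBelow (η₀ '' closure Ω))
    (τ : ℝ) : betaHat Ω T lam η₀ τ =
      (exp (lam * sInf (η₀ '' closure Ω)) - exp (2 * lam * supAbs Ω η₀)) / lW T τ ^ 4 :=
  sInf_image_comp_of_monotone (monotone_exp_mul_sub_div hlam _ _) (by fun_prop) hne hbdd

lemma gamStar_eq (hlam : 0 ≤ lam) (hne : (closure Ω).Nonempty) (hbdd : BddAbove (η₀ '' closure Ω))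
    (τ : ℝ) : gamStar Ω T lam η₀ τ = exp (lam * sSup (η₀ '' closure Ω)) / lW T τ ^ 4 := by
  simpa [gamStar, gamW] using
    sSup_image_comp_of_monotone (monotone_exp_mul_sub_div hlam 0 (lW T τ)) (by fun_prop) hne hbdd

lemma gamHat_eq (hlam : 0 ≤ lam) (hne : (closure Ω).Nonempty) (hbdd : BddBelow (η₀ '' closure Ω))
    (τ : ℝ) : gamHat Ω T lam η₀ τ = exp (lam * sInf (η₀ '' closure Ω)) / lW T τ ^ 4 := by
  simpa [gamHat, gamW] using
    sInf_image_comp_of_monotone (monotone_exp_mul_sub_div hlam 0 (lW T τ)) (by fun_prop) hne hbdd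

lemma rho_eq [Nonempty (Fin N)] (hne : Ω.Nonempty) (hb : Bornology.IsBounded Ω)
    (hcont : ContinuousOn η₀ (closure Ω)) (hpos : ∀ x ∈ Ω, 0 < η₀ x)
    (hbd : ∀ x ∈ frontier Ω, η₀ x = 0) (hlam : 0 ≤ lam)
    (hM : sSup (η₀ '' closure Ω) = M) (s : ℝ) :
    (fun τ => exp ((s / 2) * betaStar Ω T lam η₀ τ - s * betaHat Ω T lam η₀ τ) *
        gamHat Ω T lam η₀ τ ^ ((13 : ℝ) / 8)) =
      fun τ => exp (s * (exp (lam * M) ^ 2 + exp (lam * M) - 2) / 2 * (lW T τ ^ 4)⁻¹) *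
        ((lW T τ ^ 4)⁻¹) ^ ((13 : ℝ) / 8) := by
  have himage := hb.isCompact_closure.image_of_continuousOn hcont
  have hcl : (closure Ω).Nonempty := hne.closure
  funext τ
  rw [betaStar_eq hlam hcl himage.bddAbove, betaHat_eq hlam hcl himage.bddBelow,
    gamHat_eq hlam hcl himage.bddBelow, sInf_image_closure_eq_zero hne hb hpos hbd,
    supAbs_eq_sSup (nonneg_on_closure_of_pos_of_frontier_eq_zero hpos hbd), hM,
    mul_zero, exp_zero, one_div, show 2 * lam * M = lam * M + lam * M by ring, exp_add]
  congr 2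
  ring

lemma exp_neg_mul_betaStar_mul_gamStar_rpow (hne : Ω.Nonempty) (hb : Bornology.IsBounded Ω)
    (hcont : ContinuousOn η₀ (closure Ω)) (hpos : ∀ x ∈ Ω, 0 < η₀ x)
    (hbd : ∀ x ∈ frontier Ω, η₀ x = 0) (hlam : 0 ≤ lam) (hM : sSup (η₀ '' closure Ω) = M)
    (s r t : ℝ) :
    exp (-s * betaStar Ω T lam η₀ t) * gamStar Ω T lam η₀ t ^ (-r) =
      exp (lam * M) ^ (-r) * exp (s * (exp (lam * M) ^ 2 - exp (lam * M)) * (lW T t ^ 4)⁻¹) *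
        ((lW T t ^ 4)⁻¹) ^ (-r) := by
  have himage := hb.isCompact_closure.image_of_continuousOn hcont
  rw [betaStar_eq hlam hne.closure himage.bddAbove, gamStar_eq hlam hne.closure himage.bddAbove,
    supAbs_eq_sSup (nonneg_on_closure_of_pos_of_frontier_eq_zero hpos hbd), hM,
    div_eq_mul_inv (exp _), mul_rpow (exp_pos _).le (inv_nonneg.2 (by positivity)),
    show 2 * lam * M = lam * M + lam * M by ring, exp_add]
  ring_nf

end Weights

theorem weight_rho_case1_estimate_general
    (N : ℕ) (hN : N = 2 ∨ N = 3) (Ω : Set (Fin N → ℝ))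
    (hΩconn : IsConnected Ω) (hΩb : Bornology.IsBounded Ω)
    (T : ℝ) (hT : 0 < T)
    (η₀ : (Fin N → ℝ) → ℝ) (hη₀sm : ContDiffOn ℝ 2 η₀ (closure Ω))
    (hη₀pos : ∀ x ∈ Ω, 0 < η₀ x) (hη₀bd : ∀ x ∈ frontier Ω, η₀ x = 0)
    :
    ∃ lam₀ > (0 : ℝ), ∀ lam : ℝ, lam₀ ≤ lam →
      ∃ s₀ > (0 : ℝ), ∀ s : ℝ, s₀ * (T ^ 4 + T ^ 8) ≤ s →
        ∃ C > (0 : ℝ), ∀ t ∈ Ioo (0 : ℝ) T, t ≠ T / 2 →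
          |deriv (fun τ => Real.exp ((s / 2) * betaStar Ω T lam η₀ τ
              - s * betaHat Ω T lam η₀ τ) * gamHat Ω T lam η₀ τ ^ ((13 : ℝ) / 8)) t| ≤
            C * Real.exp (-s * betaStar Ω T lam η₀ t) *
              gamStar Ω T lam η₀ t ^ (-(3 : ℝ) / 2) := by
  have : Nonempty (Fin N) := ⟨⟨0, by omega⟩⟩
  obtain ⟨x₀, hx₀⟩ := hΩconn.nonempty
  have hcont := hη₀sm.continuousOn
  obtain ⟨M, hMdef⟩ : ∃ M, sSup (η₀ '' closure Ω) = M := ⟨_, rfl⟩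
  have hM : 0 < M := hMdef ▸ (hη₀pos x₀ hx₀).trans_le (le_csSup
    (hΩb.isCompact_closure.image_of_continuousOn hcont).bddAbove ⟨x₀, subset_closure hx₀, rfl⟩)
  refine ⟨M⁻¹, inv_pos.2 hM, fun lam hlam => ⟨1, one_pos, fun s hs => ?_⟩⟩
  have hlam0 : 0 ≤ lam := (inv_pos.2 hM).le.trans hlam
  set a := exp (lam * M)
  have ha : 2 < a := (by linarith [exp_one_gt_d9] : (2 : ℝ) < exp 1).trans_le
    (exp_le_exp.2 (by rwa [inv_le_iff_one_le_mul₀ hM] at hlam))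
  have hs0 : 0 < s := (by positivity : (0 : ℝ) < T ^ 4 + T ^ 8).trans_le (by simpa using hs)
  have hB : 0 < s * (a - 1) * (a - 2) / 2 := by
    have := mul_pos (mul_pos hs0 (by linarith : 0 < a - 1)) (by linarith : 0 < a - 2)
    positivity
  obtain ⟨C, hC, hbound⟩ := exists_abs_mul_rpow_add_le_mul_exp (s * (a ^ 2 + a - 2) / 2)
    (p := 13 / 8) (r := 3 / 2) hB (by norm_num)
  refine ⟨4 * T * (T ^ 2 / 4) ^ 3 * C * a ^ (3 / 2 : ℝ), by positivity, fun t ht htT => ?_⟩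
  obtain ⟨v', hv, hv'⟩ := exists_hasDerivAt_inv_lW_pow ht htT
  have hvt : 0 < (lW T t ^ 4)⁻¹ := inv_pos.2 (pow_pos (lW_pos ht) 4)
  have ha' : a ^ (3 / 2 : ℝ) * a ^ (-(3 / 2) : ℝ) = 1 := by
    rw [← rpow_add (by positivity)]; norm_num
  rw [rho_eq ⟨x₀, hx₀⟩ hΩb hcont hη₀pos hη₀bd hlam0 hMdef, mul_assoc _ (exp _), neg_div,
    exp_neg_mul_betaStar_mul_gamStar_rpow ⟨x₀, hx₀⟩ hΩb hcont hη₀pos hη₀bd hlam0 hMdef]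
  calc _ ≤ _ := abs_deriv_exp_mul_rpow_comp_le hv hvt (by positivity) hv' (hbound _ hvt)
    _ = _ := by
      rw [show s * (a ^ 2 + a - 2) / 2 + s * (a - 1) * (a - 2) / 2 = s * (a ^ 2 - a) by ring]
      linear_combination -(4 * T * (T ^ 2 / 4) ^ 3 * C * exp (s * (a ^ 2 - a) * (lW T t ^ 4)⁻¹) *
        ((lW T t ^ 4)⁻¹) ^ (-(3 / 2) : ℝ)) * ha'

/-- Bound for the time derivative of the weight
`ρ(t) = e^{(s/2)β* − sβ̂} γ̂^{13/8}`. -/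
theorem weight_rho_case1_estimate
    (N : ℕ) (hN : N = 2 ∨ N = 3) (Ω : Set (Fin N → ℝ))
    (hΩo : IsOpen Ω) (hΩconn : IsConnected Ω) (hΩb : Bornology.IsBounded Ω)
    (T : ℝ) (hT : 0 < T)
    (ω₀ ω' ω : Set (Fin N → ℝ)) (hω₀o : IsOpen ω₀) (hω'o : IsOpen ω') (hωo : IsOpen ω)
    (hω₀ne : ω₀.Nonempty) (hω'ne : ω'.Nonempty) (hωne : ω.Nonempty)
    (hω₀ω' : closure ω₀ ⊆ ω') (hω'ω : closure ω' ⊆ ω) (hωΩ : closure ω ⊆ Ω)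
    (η₀ : (Fin N → ℝ) → ℝ) (hη₀sm : ContDiffOn ℝ 2 η₀ (closure Ω))
    (hη₀pos : ∀ x ∈ Ω, 0 < η₀ x) (hη₀bd : ∀ x ∈ frontier Ω, η₀ x = 0)
    (hη₀grad : ∀ x ∈ closure Ω \ ω₀, 0 < eunorm (grad η₀ x))
    :
    ∃ lam₀ > (0 : ℝ), ∀ lam : ℝ, lam₀ ≤ lam →
      ∃ s₀ > (0 : ℝ), ∀ s : ℝ, s₀ * (T ^ 4 + T ^ 8) ≤ s →
        ∃ C > (0 : ℝ), ∀ t ∈ Ioo (0 : ℝ) T, t ≠ T / 2 →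
          |deriv (fun τ => Real.exp ((s / 2) * betaStar Ω T lam η₀ τ
              - s * betaHat Ω T lam η₀ τ) * gamHat Ω T lam η₀ τ ^ ((13 : ℝ) / 8)) t| ≤
            C * Real.exp (-s * betaStar Ω T lam η₀ t) *
              gamStar Ω T lam η₀ t ^ (-(3 : ℝ) / 2) :=
  weight_rho_case1_estimate_general N hN Ω hΩconn hΩb T hT η₀ hη₀sm hη₀pos hη₀bd
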